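/- Let X be a compact Hausdorff space, μ = ⊕_{i=1}^n λ_i ⊙ δ_{x_i} ∈ I_f(X) with unique index i_0 such that λ_{i_0} = 0, let U_1, …, U_n be pairwise disjoint open neighborhoods of x_1, …, x_n respectively, and let 0 < ε < ln 3. Then for every point y ∈ U_{i_0}, the measure μ_y = 0 ⊙ δ_y ⊕ ⊕_{i ≠ i_0} λ_i ⊙ δ_{x_i} belongs to I_f(X), satisfies r(μ_y) = δ_y, and lies in the neighborhood ⟨μ; U_1, …, U_n; ε⟩ = {ν = ⊕_{j=1}^k γ_j ⊙ δ_{y_j} ∈ I_ω(X) : {y_j} ⊆ ∪_i U_i, {y_j} ∩ U_i ≠ ∅ for each i, and max{|λ_i − γ_j| : y_j ∈ U_i} < ε for each i}; consequently r maps ⟨μ; U_1, …, U_n; ε⟩ ∩ I_f(X) onto {δ_y : y ∈ U_{i_0}}. -/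

import Mathlib

open Real Set Topology

/-- The Dirac measure `δ_x` on `X`, as a functional on `C(X, ℝ)`: `δ_x(φ) = φ(x)`. -/
def dirac (X : Type*) [TopologicalSpace X] (x : X) : C(X, ℝ) → ℝ := fun φ => φ x

/-- The max-plus combination `⊕_{i=1}^n λ_i ⊙ δ_{x_i}`, i.e. the functional
`φ ↦ max_{1 ≤ i ≤ n} (λ_i + φ(x_i))`. -/
noncomputable def maxPlus {X : Type*} [TopologicalSpace X] {n : ℕ}
    (lam : Fin n → ℝ) (x : Fin n → X) : C(X, ℝ) → ℝ :=
  fun φ => ⨆ i, (lam i + φ (x i))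

/-- `μ : C(X, ℝ) → ℝ` is an idempotent probability measure:
(1) `μ(c_λ) = λ` for constant functions; (2) `μ(λ + φ) = λ + μ(φ)`;
(3) `μ(max(φ, ψ)) = max(μ(φ), μ(ψ))`. -/
def IsIPM {X : Type*} [TopologicalSpace X] (μ : C(X, ℝ) → ℝ) : Prop :=
  (∀ c : ℝ, μ (ContinuousMap.const X c) = c) ∧
  (∀ (c : ℝ) (φ : C(X, ℝ)), μ (ContinuousMap.const X c + φ) = c + μ φ) ∧
  (∀ φ ψ : C(X, ℝ), μ (φ ⊔ ψ) = max (μ φ) (μ ψ))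

/-- Membership in `I_ω(X)`: idempotent probability measures with finite support, i.e.
`μ = ⊕_{i=1}^n λ_i ⊙ δ_{x_i}` with `x_i` pairwise distinct, `λ_i ≤ 0` and `max_i λ_i = 0`. -/
def IsFS {X : Type*} [TopologicalSpace X] (μ : C(X, ℝ) → ℝ) : Prop :=
  ∃ n : ℕ, 0 < n ∧ ∃ (x : Fin n → X) (lam : Fin n → ℝ),
    Function.Injective x ∧ (∀ i, lam i ≤ 0) ∧ (∃ i, lam i = 0) ∧ μ = maxPlus lam x

/-- Membership in `I_f(X)`: `μ = ⊕_{i=1}^n λ_i ⊙ δ_{x_i}` with `x_i` pairwise distinct,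
a unique index `i₀` with `λ_{i₀} = 0`, and `λ_i ≤ -ln(n+1)` for every `i ≠ i₀`. -/
def IsIf {X : Type*} [TopologicalSpace X] (μ : C(X, ℝ) → ℝ) : Prop :=
  ∃ n : ℕ, 0 < n ∧ ∃ (x : Fin n → X) (lam : Fin n → ℝ) (i0 : Fin n),
    Function.Injective x ∧ lam i0 = 0 ∧
    (∀ i, i ≠ i0 → lam i ≤ -Real.log (n + 1)) ∧ μ = maxPlus lam x

/-- The basic neighborhood `⟨μ; U_1, …, U_n; ε⟩` of `μ = ⊕_{i=1}^n λ_i ⊙ δ_{x_i}` in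
`I_ω(X)`: all `ν = ⊕_{j=1}^k γ_j ⊙ δ_{y_j} ∈ I_ω(X)` with support in `∪_i U_i`, meeting
every `U_i`, and with `max{|λ_i − γ_j| : y_j ∈ U_i} < ε` for each `i`. -/
def nbhd {X : Type*} [TopologicalSpace X] {n : ℕ} (lam : Fin n → ℝ)
    (U : Fin n → Set X) (ε : ℝ) : Set (C(X, ℝ) → ℝ) :=
  {ν | ∃ k : ℕ, 0 < k ∧ ∃ (y : Fin k → X) (gam : Fin k → ℝ),
    Function.Injective y ∧ (∀ j, gam j ≤ 0) ∧ (∃ j, gam j = 0) ∧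
    (∀ j, ∃ i, y j ∈ U i) ∧ (∀ i, ∃ j, y j ∈ U i) ∧
    (∀ i j, y j ∈ U i → |lam i - gam j| < ε) ∧ ν = maxPlus gam y}

/-!
A measure in `I_f(X)` has a distinguished point of weight `0`, and this point is recovered
from the functional alone: testing against a continuous `φ ≤ 0` that vanishes only at that
point (among finitely many) gives the value `0`, so every other max-plus representation of
the same functional must also carry that point with weight `0`. In `⟨μ; U; ε⟩` with
`ε < ln 3`, a point of weight `0` can only lie in `U_{i₀}`, since every other `λ_i` is at most
`-ln (n + 1) ≤ -ln 3`. Conversely, moving the distinguished point `x_{i₀}` inside `U_{i₀}`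
stays in `I_f(X)` and in the neighbourhood.
-/

open Function

section MaxPlus

variable {X : Type*} [TopologicalSpace X] {n : ℕ}

lemma le_maxPlus (lam : Fin n → ℝ) (x : Fin n → X) (φ : C(X, ℝ)) (i : Fin n) :
    lam i + φ (x i) ≤ maxPlus lam x φ :=
  le_ciSup (f := fun i => lam i + φ (x i)) (Set.finite_range _).bddAbove i

lemma exists_maxPlus_eq [NeZero n] (lam : Fin n → ℝ) (x : Fin n → X) (φ : C(X, ℝ)) :
    ∃ i, maxPlus lam x φ = lam i + φ (x i) := by
  obtain ⟨i, hi⟩ := Finite.exists_max fun i => lam i + φ (x i)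
  exact ⟨i, le_antisymm (ciSup_le hi) (le_maxPlus lam x φ i)⟩

lemma maxPlus_eq_zero_iff [NeZero n] {lam : Fin n → ℝ} (hlam : ∀ i, lam i ≤ 0)
    (x : Fin n → X) {φ : C(X, ℝ)} (hφ : ∀ p, φ p ≤ 0) :
    maxPlus lam x φ = 0 ↔ ∃ i, lam i = 0 ∧ φ (x i) = 0 := by
  constructor
  · intro h
    obtain ⟨i, hi⟩ := exists_maxPlus_eq lam x φ
    have := hlam i
    have := hφ (x i)
    exact ⟨i, by linarith, by linarith⟩
  · rintro ⟨i, hlam_i, hφ_i⟩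
    obtain ⟨j, hj⟩ := exists_maxPlus_eq lam x φ
    have := le_maxPlus lam x φ i
    have := hlam j
    have := hφ (x j)
    linarith

lemma exists_continuous_nonpos_zero_neg_one [T35Space X] (p : X) {S : Set X} (hS : S.Finite)
    (hp : p ∉ S) : ∃ φ : C(X, ℝ), (∀ q, φ q ≤ 0) ∧ φ p = 0 ∧ ∀ q ∈ S, φ q = -1 := by
  obtain ⟨f, hf, hfp, hfS⟩ := CompletelyRegularSpace.completely_regular p S hS.isClosed hp
  refine ⟨⟨fun q => -(f q : ℝ), by fun_prop⟩, fun q => neg_nonpos.2 (f q).2.1, ?_, ?_⟩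
  · simp [hfp]
  · intro q hq
    simp [hfS hq]

lemma exists_weight_eq_zero_of_maxPlus_eq [T35Space X] {m k : ℕ} [NeZero k] {z : Fin m → X}
    {c : Fin m → ℝ} {j0 : Fin m} (hc : ∀ j, c j ≤ 0) (hc0 : c j0 = 0) {y : Fin k → X}
    {gam : Fin k → ℝ} (hgam : ∀ j, gam j ≤ 0) (heq : maxPlus c z = maxPlus gam y) :
    ∃ j, y j = z j0 ∧ gam j = 0 := by
  have : NeZero m := ⟨j0.pos.ne'⟩
  obtain ⟨φ, hφ, hφ0, hφS⟩ := exists_continuous_nonpos_zero_neg_one (z j0)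
    ((Set.finite_range y).sdiff (t := {z j0})) (fun h => h.2 rfl)
  have hz : maxPlus c z φ = 0 := (maxPlus_eq_zero_iff hc z hφ).2 ⟨j0, hc0, hφ0⟩
  obtain ⟨j, hgj, hφj⟩ := (maxPlus_eq_zero_iff hgam y hφ).1 (heq ▸ hz)
  refine ⟨j, by_contra fun hne => ?_, hgj⟩
  have := hφS (y j) ⟨⟨j, rfl⟩, hne⟩
  linarith

end MaxPlus

lemma nonpos_of_le_neg_log {n : ℕ} {lam : Fin n → ℝ} {i0 : Fin n} (h0 : lam i0 = 0)
    (hle : ∀ i, i ≠ i0 → lam i ≤ -Real.log (n + 1)) (i : Fin n) : lam i ≤ 0 := by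
  rcases eq_or_ne i i0 with rfl | hi
  · exact h0.le
  · exact (hle i hi).trans (neg_nonpos.2 (Real.log_nonneg (by linarith [n.cast_nonneg (α := ℝ)])))

lemma log_three_le_log_of_ne {n : ℕ} {i j : Fin n} (hij : i ≠ j) :
    Real.log 3 ≤ Real.log (n + 1) := by
  have h2 : (2 : ℝ) ≤ n := by
    have : 2 ≤ n := by
      by_contra h
      exact hij (Fin.ext (by omega))
    exact_mod_cast this
  exact Real.log_le_log (by norm_num) (by linarith)

lemma injective_of_mem_of_pairwise_disjoint {X ι : Type*} {x : ι → X} {U : ι → Set X}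
    (hdisj : Pairwise (Disjoint on U)) (hxU : ∀ i, x i ∈ U i) : Injective x :=
  fun i j hij => by_contra fun hne => (hdisj hne).ne_of_mem (hxU i) (hxU j) hij

section Nbhd

variable {X : Type*} [TopologicalSpace X] {n : ℕ} {lam : Fin n → ℝ} {U : Fin n → Set X}
  {ε : ℝ}

lemma maxPlus_mem_nbhd_self {x : Fin n → X} {i0 : Fin n} (hlam : ∀ i, lam i ≤ 0)
    (h0 : lam i0 = 0) (hdisj : Pairwise (Disjoint on U)) (hxU : ∀ i, x i ∈ U i) (hε : 0 < ε) :
    maxPlus lam x ∈ nbhd lam U ε := by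
  refine ⟨n, i0.pos, x, lam, injective_of_mem_of_pairwise_disjoint hdisj hxU, hlam,
    ⟨i0, h0⟩, fun j => ⟨j, hxU j⟩, fun i => ⟨i, hxU i⟩, fun i j hj => ?_, rfl⟩
  obtain rfl : i = j := by_contra fun hne => (hdisj hne).ne_of_mem hj (hxU j) rfl
  simpa using hε

lemma mem_of_maxPlus_mem_nbhd [T35Space X] {i0 : Fin n}
    (hle : ∀ i, i ≠ i0 → lam i ≤ -Real.log (n + 1)) (hε : ε ≤ Real.log 3) {m : ℕ}
    {z : Fin m → X} {c : Fin m → ℝ} {j0 : Fin m} (hc : ∀ j, c j ≤ 0) (hc0 : c j0 = 0)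
    (hν : maxPlus c z ∈ nbhd lam U ε) : z j0 ∈ U i0 := by
  obtain ⟨k, hk, y, gam, -, hgam, -, hyU, -, hclose, heq⟩ := hν
  have : NeZero k := ⟨hk.ne'⟩
  obtain ⟨j, hyj, hgj⟩ := exists_weight_eq_zero_of_maxPlus_eq hc hc0 hgam heq
  obtain ⟨i, hi⟩ := hyU j
  obtain rfl : i = i0 := by
    by_contra hne
    have hlt := hclose i j hi
    rw [hgj, sub_zero] at hlt
    linarith [neg_le_abs (lam i), hle i hne, log_three_le_log_of_ne hne]
  exact hyj ▸ hi

end Nbhd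

theorem stmt18_general {X : Type*} [TopologicalSpace X] [CompactSpace X] [T2Space X]
    (r : {μ : C(X, ℝ) → ℝ // IsIf μ} → C(X, ℝ) → ℝ)
    (hr : ∀ (m : ℕ), 0 < m → ∀ (z : Fin m → X) (c : Fin m → ℝ) (j0 : Fin m),
      Function.Injective z → c j0 = 0 →
      (∀ j, j ≠ j0 → c j ≤ -Real.log (m + 1)) →
      ∀ hμ : IsIf (maxPlus c z), r ⟨maxPlus c z, hμ⟩ = dirac X (z j0))
    {n : ℕ} (x : Fin n → X)
    (lam : Fin n → ℝ) (i0 : Fin n) (h0 : lam i0 = 0)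
    (hle : ∀ i, i ≠ i0 → lam i ≤ -Real.log (n + 1))
    (U : Fin n → Set X) (hxU : ∀ i, x i ∈ U i)
    (hUdisj : ∀ i j, i ≠ j → Disjoint (U i) (U j))
    (ε : ℝ) (hε0 : 0 < ε) (hε3 : ε < Real.log 3) :
    (∀ y ∈ U i0, ∃ h : IsIf (maxPlus lam (Function.update x i0 y)),
      maxPlus lam (Function.update x i0 y) ∈ nbhd lam U ε ∧
      r ⟨maxPlus lam (Function.update x i0 y), h⟩ = dirac X y) ∧
    (∀ ν : {μ : C(X, ℝ) → ℝ // IsIf μ}, ν.1 ∈ nbhd lam U ε →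
      ∃ y ∈ U i0, r ν = dirac X y) ∧
    (∀ y ∈ U i0, ∃ ν : {μ : C(X, ℝ) → ℝ // IsIf μ},
      ν.1 ∈ nbhd lam U ε ∧ r ν = dirac X y) := by
  have moved : ∀ y ∈ U i0, ∃ h : IsIf (maxPlus lam (Function.update x i0 y)),
      maxPlus lam (Function.update x i0 y) ∈ nbhd lam U ε ∧
      r ⟨maxPlus lam (Function.update x i0 y), h⟩ = dirac X y := by
    intro y hy
    have hxU' : ∀ i, update x i0 y i ∈ U i :=
      (forall_update_iff x (p := fun i q => q ∈ U i)).2 ⟨hy, fun i _ => hxU i⟩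
    have hinj := injective_of_mem_of_pairwise_disjoint hUdisj hxU'
    refine ⟨⟨n, i0.pos, _, lam, i0, hinj, h0, hle, rfl⟩,
      maxPlus_mem_nbhd_self (nonpos_of_le_neg_log h0 hle) h0 hUdisj hxU' hε0, ?_⟩
    simpa using hr n i0.pos _ lam i0 hinj h0 hle _
  refine ⟨moved, ?_, fun y hy => ?_⟩
  · rintro ⟨_, m, hm, z, c, j0, hz, hc0, hcle, rfl⟩ hν
    exact ⟨z j0, mem_of_maxPlus_mem_nbhd hle hε3.le (nonpos_of_le_neg_log hc0 hcle) hc0 hν,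
      hr m hm z c j0 hz hc0 hcle _⟩
  · obtain ⟨h, hν, hrν⟩ := moved y hy
    exact ⟨⟨_, h⟩, hν, hrν⟩

/-- let `μ = ⊕_{i=1}^n λ_i ⊙ δ_{x_i} ∈ I_f(X)` with unique index `i₀` such
that `λ_{i₀} = 0`, let `U_1, …, U_n` be pairwise disjoint open neighborhoods of the `x_i`,
and let `0 < ε < ln 3`. Then for every `y ∈ U_{i₀}` the measure
`μ_y = 0 ⊙ δ_y ⊕ ⊕_{i ≠ i₀} λ_i ⊙ δ_{x_i}` belongs to `I_f(X)`, lies in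
`⟨μ; U_1, …, U_n; ε⟩`, and satisfies `r(μ_y) = δ_y`; consequently `r` maps
`⟨μ; U_1, …, U_n; ε⟩ ∩ I_f(X)` onto `{δ_y : y ∈ U_{i₀}}`. -/
theorem stmt18 {X : Type*} [TopologicalSpace X] [CompactSpace X] [T2Space X]
    (r : {μ : C(X, ℝ) → ℝ // IsIf μ} → C(X, ℝ) → ℝ)
    (hr : ∀ (m : ℕ), 0 < m → ∀ (z : Fin m → X) (c : Fin m → ℝ) (j0 : Fin m),
      Function.Injective z → c j0 = 0 →
      (∀ j, j ≠ j0 → c j ≤ -Real.log (m + 1)) →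
      ∀ hμ : IsIf (maxPlus c z), r ⟨maxPlus c z, hμ⟩ = dirac X (z j0))
    {n : ℕ} (hn : 0 < n) (x : Fin n → X) (hx : Function.Injective x)
    (lam : Fin n → ℝ) (i0 : Fin n) (h0 : lam i0 = 0)
    (hle : ∀ i, i ≠ i0 → lam i ≤ -Real.log (n + 1))
    (U : Fin n → Set X) (hUopen : ∀ i, IsOpen (U i)) (hxU : ∀ i, x i ∈ U i)
    (hUdisj : ∀ i j, i ≠ j → Disjoint (U i) (U j))
    (ε : ℝ) (hε0 : 0 < ε) (hε3 : ε < Real.log 3) :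
    (∀ y ∈ U i0, ∃ h : IsIf (maxPlus lam (Function.update x i0 y)),
      maxPlus lam (Function.update x i0 y) ∈ nbhd lam U ε ∧
      r ⟨maxPlus lam (Function.update x i0 y), h⟩ = dirac X y) ∧
    (∀ ν : {μ : C(X, ℝ) → ℝ // IsIf μ}, ν.1 ∈ nbhd lam U ε →
      ∃ y ∈ U i0, r ν = dirac X y) ∧
    (∀ y ∈ U i0, ∃ ν : {μ : C(X, ℝ) → ℝ // IsIf μ},
      ν.1 ∈ nbhd lam U ε ∧ r ν = dirac X y) :=
  stmt18_general r hr x lam i0 h0 hle U hxU hUdisj ε hε0 hε3
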